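/- Let q ≥ 2 and let S = (P, L, I) be a finite generalized hexagon of order (q,q) such that for every pair of lines ℓ₁, ℓ₂ at distance 6 in the incidence graph of S there is a unique subhexagon of S of order (q,1) containing both ℓ₁ and ℓ₂. Let O be a partial distance-2 ovoid of S such that no subhexagon of S of order (q,1) contains q² + q + 1 points of O. Then |O| ≤ (q² − q + 1)(q² + q). -/

import Mathlib

open SimpleGraph
section Geometry

variable {P L : Type*}

/-- The adjacency relation of the incidence graph of a point-line geometry. -/
def IncAdj (I : P → L → Prop) : P ⊕ L → P ⊕ L → Prop
  | Sum.inl p, Sum.inr l => I p l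
  | Sum.inr l, Sum.inl p => I p l
  | _, _ => False

/-- The incidence graph of a point-line geometry: vertices are points and lines,
a point is adjacent to a line iff they are incident. -/
def incidenceGraph (I : P → L → Prop) : SimpleGraph (P ⊕ L) where
  Adj := IncAdj I
  symm := ⟨by intro a b h; cases a <;> cases b <;> simp_all [IncAdj]⟩
  loopless := ⟨by intro a h; cases a <;> simp_all [IncAdj]⟩

/-- The point graph of a point-line geometry: distinct points are adjacent iff they
are incident with a common line. -/
def pointGraph (I : P → L → Prop) : SimpleGraph P where
  Adj x y := x ≠ y ∧ ∃ l, I x l ∧ I y l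
  symm := ⟨by rintro x y ⟨h, l, hx, hy⟩; exact ⟨h.symm, l, hy, hx⟩⟩
  loopless := ⟨by rintro x ⟨h, -⟩; exact h rfl⟩

/-- Distance from a point to a line: the minimum point-graph distance from `x`
to a point incident with `l`. -/
noncomputable def distPL (I : P → L → Prop) (x : P) (l : L) : ℕ :=
  sInf ((pointGraph I).dist x '' {y | I y l})

/-- Distance between two lines: the minimum point-graph distance between a point of `l`
and a point of `l'`. -/
noncomputable def distLL (I : P → L → Prop) (l l' : L) : ℕ :=
  sInf {n | ∃ x y, I x l ∧ I y l' ∧ (pointGraph I).dist x y = n}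

/-- A generalized `n`-gon of order `(s, t)`: every line has `s + 1` points, every point is
on `t + 1` lines, and the incidence graph has diameter `n` and girth `2 * n`. -/
structure IsGenPolygon (I : P → L → Prop) (n s t : ℕ) : Prop where
  pts_nonempty : Nonempty P
  line_card : ∀ l : L, {p : P | I p l}.ncard = s + 1
  point_card : ∀ p : P, {l : L | I p l}.ncard = t + 1
  ediam_eq : (incidenceGraph I).ediam = n
  egirth_eq : (incidenceGraph I).egirth = 2 * n

/-- A subhexagon of order `(s, t')` of a generalized hexagon. -/
def IsSubhexagon (I : P → L → Prop) (s t' : ℕ) (P' : Set P) (L' : Set L) : Prop :=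
  (∀ p : P, ∀ l ∈ L', I p l → p ∈ P') ∧
  IsGenPolygon (fun (p : P') (l : L') => I p.1 l.1) 6 s t'

/-- A distance-`j` ovoid of a generalized `2d`-gon (in terms of the point graph). -/
def IsDistanceOvoid (I : P → L → Prop) (j : ℕ) (O : Set P) : Prop :=
  (∀ x ∈ O, ∀ y ∈ O, x ≠ y → j ≤ (pointGraph I).dist x y) ∧
  (∀ a : P, ∃ x ∈ O, 2 * (pointGraph I).dist a x ≤ j) ∧
  (∀ l : L, ∃ x ∈ O, 2 * distPL I x l ≤ j - 1)

end Geometry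

/-!
A line of `S` lies in exactly `q³` subhexagons of order `(q, 1)`: pair it with each of its `q⁵`
opposite lines, which determine a unique subhexagon, and note that a subhexagon through the line
contains `q²` of them. Hence a point lies in `q³(q + 1)/2` subhexagons and there are
`q³(q + 1)(q² - q + 1)/2` subhexagons in all. A partial distance-2 ovoid meets a subhexagon, whose
`2(q² + q + 1)` lines carry two of its points each, in at most `q² + q + 1` points, so by
hypothesis in at most `q² + q`; double counting pairs (ovoid point, subhexagon through it) gives
the bound.

The counts inside a generalized hexagon come from the distance layers around a line: girth 12
makes the predecessor of a vertex at distance at most 5 unique, so the layer sizes grow by the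
factors `s` and `t` alternately.
-/

theorem Set.ncard_mul_le_ncard_mul {α β : Type*} [Finite α] [Finite β] (r : α → β → Prop)
    {A : Set α} {B : Set β} {m n : ℕ} (hm : ∀ a ∈ A, m ≤ {b ∈ B | r a b}.ncard)
    (hn : ∀ b ∈ B, {a ∈ A | r a b}.ncard ≤ n) : A.ncard * m ≤ B.ncard * n := by
  classical
  have := Fintype.ofFinite α
  have := Fintype.ofFinite β
  simp only [Set.ncard_eq_toFinset_card'] at *
  refine Finset.card_mul_le_card_mul r (fun a ha => ?_) (fun b hb => ?_)
  · convert hm a (by simpa using ha) using 2; ext; simp [Finset.mem_bipartiteAbove]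
  · convert hn b (by simpa using hb) using 2; ext; simp [Finset.mem_bipartiteBelow]

theorem Set.ncard_mul_eq_ncard_mul {α β : Type*} [Finite α] [Finite β] (r : α → β → Prop)
    {A : Set α} {B : Set β} {m n : ℕ} (hm : ∀ a ∈ A, {b ∈ B | r a b}.ncard = m)
    (hn : ∀ b ∈ B, {a ∈ A | r a b}.ncard = n) : A.ncard * m = B.ncard * n :=
  (Set.ncard_mul_le_ncard_mul r (fun a ha => (hm a ha).ge) (fun b hb => (hn b hb).le)).antisymm
    (Set.ncard_mul_le_ncard_mul (Function.swap r) (fun b hb => (hn b hb).ge)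
      (fun a ha => (hm a ha).le))

theorem Set.ncard_eq_one_of_existsUnique {α : Type*} {p : α → Prop} (h : ∃! a, p a) :
    {a | p a}.ncard = 1 := by
  obtain ⟨a, ha, huniq⟩ := h
  exact Set.ncard_eq_one.mpr ⟨a, Set.eq_singleton_iff_unique_mem.mpr ⟨ha, huniq⟩⟩

namespace SimpleGraph
variable {V : Type*} {G : SimpleGraph V}

/- The edges of `p` and `q` span a subgraph that is not a forest; a shortest cycle in it uses
each of these edges at most once. -/
theorem egirth_le_length_add_length {u v : V} {p q : G.Walk u v} (hp : p.IsPath)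
    (hq : q.IsPath) (hne : p ≠ q) : G.egirth ≤ ((p.length + q.length : ℕ) : ℕ∞) := by
  set H := fromEdgeSet {e | e ∈ p.edges ++ q.edges}
  have hHG : H ≤ G := fromEdgeSet_edgeSet G ▸ fromEdgeSet_mono fun e he => by
    simp only [Set.mem_ofPred_eq, List.mem_append] at he
    exact he.elim (p.edges_subset_edgeSet ·) (q.edges_subset_edgeSet ·)
  have hsub : ∀ w : G.Walk u v, (∀ e ∈ w.edges, e ∈ p.edges ++ q.edges) →
      ∀ e ∈ w.edges, e ∈ H.edgeSet := fun w hw e he => by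
    rw [edgeSet_fromEdgeSet]
    exact ⟨hw e he, G.not_isDiag_of_mem_edgeSet (w.edges_subset_edgeSet he)⟩
  have hpH := hsub p fun e he => List.mem_append_left _ he
  have hqH := hsub q fun e he => List.mem_append_right _ he
  have hcyc : ¬ H.IsAcyclic := fun hac => hne <| Walk.ext_support <| by
    simpa only [Walk.support_transfer] using congrArg (·.1.support)
      ((hac.subsingleton_path u v).elim ⟨_, hp.transfer hpH⟩ ⟨_, hq.transfer hqH⟩)
  obtain ⟨a, c, hc, hlen⟩ := exists_egirth_eq_length.mpr hcyc
  have hcsub : c.edges ⊆ p.edges ++ q.edges := fun e he => by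
    have := c.edges_subset_edgeSet he
    rw [edgeSet_fromEdgeSet] at this
    exact this.1
  calc G.egirth ≤ H.egirth := egirth_anti hHG
    _ = c.edges.length := by rw [hlen, Walk.length_edges]
    _ ≤ (p.edges ++ q.edges).length := by
        exact_mod_cast (hc.edges_nodup.subperm hcsub).length_le
    _ = (p.length + q.length : ℕ) := by simp

theorem Walk.IsPath.eq_of_length_add_lt_egirth {u v : V} {p q : G.Walk u v} (hp : p.IsPath)
    (hq : q.IsPath) (h : ((p.length + q.length : ℕ) : ℕ∞) < G.egirth) : p = q := by
  by_contra hne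
  exact (egirth_le_length_add_length hp hq hne).not_gt h

theorem Connected.dist_eq_length_of_isPath (hG : G.Connected) {u v : V} {p : G.Walk u v}
    (hp : p.IsPath) (h : ((G.dist u v + p.length : ℕ) : ℕ∞) < G.egirth) :
    G.dist u v = p.length := by
  obtain ⟨g, hg, hgl⟩ := hG.exists_path_of_dist u v
  rw [← hgl] at h ⊢
  rw [hg.eq_of_length_add_lt_egirth hp h]

theorem Connected.existsUnique_adj_of_dist_eq_add_one (hG : G.Connected) {r v : V} {k : ℕ}
    (hv : G.dist r v = k + 1) (hgirth : ((2 * (k + 1) : ℕ) : ℕ∞) < G.egirth) :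
    ∃! u, G.dist r u = k ∧ G.Adj u v := by
  classical
  obtain ⟨g, hg, hgl⟩ := hG.exists_path_of_dist v r
  rw [dist_comm, hv] at hgl
  cases g with
  | nil => simp at hgl
  | @cons _ u₀ _ hadj g' =>
    have hg'l : g'.length = k := by simpa using hgl
    have hu₀ : G.dist r u₀ = k := by
      have h1 : G.dist u₀ r ≤ k := hg'l ▸ dist_le g'
      have h2 : G.dist r v ≤ G.dist r u₀ + G.dist u₀ v := hG.dist_triangle
      rw [dist_eq_one_iff_adj.mpr hadj.symm] at h2
      rw [dist_comm] at h1
      omega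
    refine ⟨u₀, ⟨hu₀, hadj.symm⟩, fun u ⟨hu, huv⟩ => ?_⟩
    obtain ⟨p, hp, hpl⟩ := hG.exists_path_of_dist u r
    rw [dist_comm, hu] at hpl
    have hvp : v ∉ p.support := fun hmem => by
      have := (dist_le (p.dropUntil v hmem)).trans (p.length_dropUntil_le_length hmem)
      rw [dist_comm, hv] at this
      omega
    have heq := ((Walk.cons_isPath_iff huv.symm p).mpr ⟨hp, hvp⟩).eq_of_length_add_lt_egirth hg
      (by convert hgirth using 2; simp only [Walk.length_cons, hpl, hg'l]; ring)
    simpa using congrArg Walk.snd heq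

theorem Connected.ncard_dist_eq_add_two_mul [Finite V] (hG : G.Connected) {r : V}
    (hpar : ∀ u v, G.Adj u v → G.dist r u ≠ G.dist r v) {k d e : ℕ}
    (hgirth : ((2 * (k + 1) : ℕ) : ℕ∞) < G.egirth)
    (hdeg : ∀ u, G.dist r u = k + 1 → (G.neighborSet u).ncard = d + 1)
    (hback : ∀ v, G.dist r v = k + 2 → {u | G.dist r u = k + 1 ∧ G.Adj u v}.ncard = e) :
    {v | G.dist r v = k + 2}.ncard * e = {u | G.dist r u = k + 1}.ncard * d := by
  refine Set.ncard_mul_eq_ncard_mul (fun v u => G.Adj u v) (fun v hv => hback v hv) fun u hu => ?_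
  have hsplit : {v | v ∈ {v | G.dist r v = k + 2} ∧ G.Adj u v} =
      G.neighborSet u \ {w | G.dist r w = k ∧ G.Adj w u} := by
    ext v
    simp only [Set.mem_ofPred_eq, Set.mem_sdiff, mem_neighborSet, not_and]
    rw [Set.mem_ofPred_eq] at hu
    refine ⟨fun ⟨hv, huv⟩ => ⟨huv, fun hw => by omega⟩,
      fun ⟨huv, hnot⟩ => ⟨?_, huv⟩⟩
    have := hpar u v huv
    rcases huv.diff_dist_adj (u := r) with h | h | h
    · exact absurd h.symm this
    · omega
    · exact absurd huv.symm (hnot (by omega))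
  rw [hsplit, Set.ncard_sdiff fun w hw => hw.2.symm, hdeg u hu,
    Set.ncard_eq_one_of_existsUnique (hG.existsUnique_adj_of_dist_eq_add_one hu hgirth),
    Nat.add_sub_cancel]

end SimpleGraph

section IncidenceGraph

variable {X Y : Type*} {J : X → Y → Prop}

@[simp]
theorem incidenceGraph_adj_inl_inr {p : X} {l : Y} :
    (incidenceGraph J).Adj (Sum.inl p) (Sum.inr l) ↔ J p l := Iff.rfl

@[simp]
theorem incidenceGraph_adj_inr_inl {p : X} {l : Y} :
    (incidenceGraph J).Adj (Sum.inr l) (Sum.inl p) ↔ J p l := Iff.rfl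

@[simp]
theorem incidenceGraph_not_adj_inl_inl {p p' : X} :
    ¬ (incidenceGraph J).Adj (Sum.inl p) (Sum.inl p') := id

@[simp]
theorem incidenceGraph_not_adj_inr_inr {l l' : Y} :
    ¬ (incidenceGraph J).Adj (Sum.inr l) (Sum.inr l') := id

theorem incidenceGraph_isLeft_of_adj {u v : X ⊕ Y} (h : (incidenceGraph J).Adj u v) :
    u.isLeft = !v.isLeft := by
  rcases u with _ | _ <;> rcases v with _ | _ <;> simp_all

theorem even_length_incidenceGraph_walk_iff {u v : X ⊕ Y} (w : (incidenceGraph J).Walk u v) :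
    Even w.length ↔ u.isLeft = v.isLeft := by
  induction w with
  | nil => simp
  | cons h _ ih =>
    rw [Walk.length_cons, Nat.even_add_one, ih, incidenceGraph_isLeft_of_adj h]
    cases Sum.isLeft _ <;> cases Sum.isLeft _ <;> simp

theorem even_incidenceGraph_dist_iff (hG : (incidenceGraph J).Connected) (u v : X ⊕ Y) :
    Even ((incidenceGraph J).dist u v) ↔ u.isLeft = v.isLeft := by
  obtain ⟨w, -, hw⟩ := hG.exists_path_of_dist u v
  rw [← hw, even_length_incidenceGraph_walk_iff]

theorem incidenceGraph_dist_ne_of_adj (hG : (incidenceGraph J).Connected) (r : X ⊕ Y)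
    {u v : X ⊕ Y} (h : (incidenceGraph J).Adj u v) :
    (incidenceGraph J).dist r u ≠ (incidenceGraph J).dist r v := fun heq => by
  have hu := even_incidenceGraph_dist_iff hG r u
  rw [heq, even_incidenceGraph_dist_iff hG, incidenceGraph_isLeft_of_adj h] at hu
  rcases r with _ | _ <;> rcases v with _ | _ <;> simp at hu

theorem ncard_incidenceGraph_neighborSet (u : X ⊕ Y) :
    ((incidenceGraph J).neighborSet u).ncard =
      u.elim (fun p => {l | J p l}.ncard) (fun l => {p | J p l}.ncard) := by
  rcases u with p | l
  · have : (incidenceGraph J).neighborSet (Sum.inl p) = Sum.inr '' {l | J p l} := by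
      ext (_ | _) <;> simp
    rw [this, Set.ncard_image_of_injective _ Sum.inr_injective, Sum.elim_inl]
  · have : (incidenceGraph J).neighborSet (Sum.inr l) = Sum.inl '' {p | J p l} := by
      ext (_ | _) <;> simp
    rw [this, Set.ncard_image_of_injective _ Sum.inl_injective, Sum.elim_inr]

theorem ncard_incidenceGraph_dist_inr_eq (hG : (incidenceGraph J).Connected) (l₀ : Y) {k : ℕ}
    (hk : Even k) :
    {l | (incidenceGraph J).dist (Sum.inr l₀) (Sum.inr l) = k}.ncard =
      {v | (incidenceGraph J).dist (Sum.inr l₀) v = k}.ncard := by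
  have : {v | (incidenceGraph J).dist (Sum.inr l₀) v = k} =
      Sum.inr '' {l | (incidenceGraph J).dist (Sum.inr l₀) (Sum.inr l) = k} := by
    ext (p | l)
    · simp only [Set.mem_ofPred_eq, Set.mem_image, reduceCtorEq, and_false, exists_false,
        iff_false]
      rintro rfl
      simpa using (even_incidenceGraph_dist_iff hG _ _).mp hk
    · simp
  rw [this, Set.ncard_image_of_injective _ Sum.inr_injective]

end IncidenceGraph

namespace IsGenPolygon

variable {X Y : Type*} {J : X → Y → Prop} {n s t : ℕ}

theorem connected (h : IsGenPolygon J n s t) : (incidenceGraph J).Connected :=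
  have := h.pts_nonempty.map (Sum.inl : X → X ⊕ Y)
  connected_of_ediam_ne_top (by simp [h.ediam_eq])

theorem dist_le (h : IsGenPolygon J n s t) (u v : X ⊕ Y) : (incidenceGraph J).dist u v ≤ n := by
  have := dist_le_diam (G := incidenceGraph J) (u := u) (v := v) (by simp [h.ediam_eq])
  rwa [diam, h.ediam_eq, ENat.toNat_natCast] at this

theorem nonempty_lines (h : IsGenPolygon J n s t) : Nonempty Y := by
  obtain ⟨p⟩ := h.pts_nonempty
  obtain ⟨l, -⟩ := Set.nonempty_of_ncard_ne_zero (s := {l | J p l}) (by simp [h.point_card p])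
  exact ⟨l⟩

theorem ncard_neighborSet_of_dist_inr (h : IsGenPolygon J n s t) {l₀ : Y} {u : X ⊕ Y} {k : ℕ}
    (hu : (incidenceGraph J).dist (Sum.inr l₀) u = k) :
    ((incidenceGraph J).neighborSet u).ncard = if k % 2 = 0 then s + 1 else t + 1 := by
  subst hu
  rcases u with p | l <;>
    simp [ncard_incidenceGraph_neighborSet, ← Nat.even_iff,
      even_incidenceGraph_dist_iff h.connected, h.line_card, h.point_card]

theorem setOf_dist_eq_and_adj_eq_neighborSet (h : IsGenPolygon J (n + 1) s t) {r v : X ⊕ Y}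
    (hv : (incidenceGraph J).dist r v = n + 1) :
    {u | (incidenceGraph J).dist r u = n ∧ (incidenceGraph J).Adj u v} =
      (incidenceGraph J).neighborSet v := by
  ext u
  rw [Set.mem_ofPred_eq, mem_neighborSet]
  refine ⟨fun hu => hu.2.symm, fun hvu => ⟨?_, hvu.symm⟩⟩
  have hle := h.dist_le r u
  have hne := incidenceGraph_dist_ne_of_adj h.connected r hvu
  rcases hvu.diff_dist_adj (u := r) with h' | h' | h' <;> omega

end IsGenPolygon

namespace IsGenPolygon

variable {X Y : Type*} [Finite X] [Finite Y] {J : X → Y → Prop} {s t : ℕ}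

theorem ncard_dist_eq_of_line (h : IsGenPolygon J 6 s t) (l₀ : Y) :
    {v | (incidenceGraph J).dist (Sum.inr l₀) v = 2}.ncard = (s + 1) * t ∧
    {v | (incidenceGraph J).dist (Sum.inr l₀) v = 4}.ncard = (s + 1) * s * t ^ 2 ∧
    {v | (incidenceGraph J).dist (Sum.inr l₀) v = 6}.ncard = s ^ 2 * t ^ 3 := by
  set G := incidenceGraph J
  set r : X ⊕ Y := Sum.inr l₀
  have hG := h.connected
  have hpar : ∀ u v, G.Adj u v → G.dist r u ≠ G.dist r v :=
    fun u v huv => incidenceGraph_dist_ne_of_adj hG r huv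
  have hgirth : ∀ k ≤ 5, ((2 * k : ℕ) : ℕ∞) < G.egirth := fun k hk => by
    rw [h.egirth_eq]; exact_mod_cast (by omega : 2 * k < 2 * 6)
  have hstep : ∀ k ≤ 3, {v | G.dist r v = k + 2}.ncard =
      {u | G.dist r u = k + 1}.ncard * (if (k + 1) % 2 = 0 then s else t) := fun k hk => by
    simpa using hG.ncard_dist_eq_add_two_mul hpar (d := if (k + 1) % 2 = 0 then s else t)
      (hgirth (k + 1) (by omega))
      (fun u hu => by rw [h.ncard_neighborSet_of_dist_inr hu]; split_ifs <;> rfl)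
      (fun v hv => Set.ncard_eq_one_of_existsUnique
        (hG.existsUnique_adj_of_dist_eq_add_one hv (hgirth (k + 2) (by omega))))
  have hlast : {v | G.dist r v = 6}.ncard * (s + 1) = {u | G.dist r u = 5}.ncard * t :=
    hG.ncard_dist_eq_add_two_mul hpar (k := 4) (hgirth 5 le_rfl)
      (fun u hu => h.ncard_neighborSet_of_dist_inr hu) fun v hv => by
        rw [h.setOf_dist_eq_and_adj_eq_neighborSet (n := 5) hv,
          h.ncard_neighborSet_of_dist_inr hv]
        rfl
  have h1 : {u | G.Adj r u}.ncard = s + 1 := h.ncard_neighborSet_of_dist_inr dist_self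
  have h2 := hstep 0 (by omega)
  have h3 := hstep 1 (by omega)
  have h4 := hstep 2 (by omega)
  have h5 := hstep 3 (by omega)
  norm_num at h2 h3 h4 h5
  refine ⟨by rw [h2, h1], by rw [h4, h3, h2, h1]; ring, ?_⟩
  rw [h5, h4, h3, h2, h1] at hlast
  exact Nat.eq_of_mul_eq_mul_right (by omega : 0 < s + 1) (by rw [hlast]; ring)

theorem ncard_opposite_lines (h : IsGenPolygon J 6 s t) (l₀ : Y) :
    {l | (incidenceGraph J).dist (Sum.inr l₀) (Sum.inr l) = 6}.ncard = s ^ 2 * t ^ 3 :=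
  (ncard_incidenceGraph_dist_inr_eq h.connected l₀ (by decide)).trans
    (h.ncard_dist_eq_of_line l₀).2.2

theorem card_lines (h : IsGenPolygon J 6 s t) :
    Nat.card Y = (1 + t) * (1 + s * t + s ^ 2 * t ^ 2) := by
  classical
  have := Fintype.ofFinite Y
  obtain ⟨l₀⟩ := h.nonempty_lines
  obtain ⟨h2, h4, h6⟩ := h.ncard_dist_eq_of_line l₀
  set f : Y → ℕ := fun l => (incidenceGraph J).dist (Sum.inr l₀) (Sum.inr l)
  have hfiber : ∀ k, (Finset.univ.filter (f · = k)).card = {l | f l = k}.ncard := fun k => by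
    rw [← Set.ncard_coe_finset, Finset.coe_filter]; simp
  have hodd : ∀ k, ¬ Even k → {l | f l = k} = ∅ := fun k hk => by
    ext l
    simp only [Set.mem_ofPred_eq, Set.mem_empty_iff_false, iff_false]
    rintro rfl
    exact hk ((even_incidenceGraph_dist_iff h.connected _ _).mpr rfl)
  have h0 : {l | f l = 0} = {l₀} := by
    ext l
    simp [f, h.connected.dist_eq_zero_iff, eq_comm]
  rw [Nat.card_eq_fintype_card, ← Finset.card_univ, Finset.card_eq_sum_card_fiberwise
    (f := f) (t := Finset.range 7) fun l _ =>
      Finset.mem_range.mpr (Nat.lt_succ_of_le (h.dist_le _ _))]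
  simp only [Finset.sum_range_succ, Finset.range_zero, Finset.sum_empty, hfiber]
  rw [h0, hodd 1 (by decide), hodd 3 (by decide), hodd 5 (by decide),
    ncard_incidenceGraph_dist_inr_eq h.connected l₀ (by decide : Even 2), h2,
    ncard_incidenceGraph_dist_inr_eq h.connected l₀ (by decide : Even 4), h4,
    ncard_incidenceGraph_dist_inr_eq h.connected l₀ (by decide : Even 6), h6]
  simp only [Set.ncard_singleton, Set.ncard_empty]
  ring

end IsGenPolygon

theorem SimpleGraph.Reachable.dist_map_le {V W : Type*} {G : SimpleGraph V} {G' : SimpleGraph W}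
    (f : G →g G') {u v : V} (h : G.Reachable u v) : G'.dist (f u) (f v) ≤ G.dist u v := by
  obtain ⟨p, hp⟩ := h.exists_walk_length_eq_dist
  simpa [hp] using dist_le (p.map f)

section Subgeometry

variable {X Y : Type*} {J : X → Y → Prop} {P' : Set X} {L' : Set Y}

def incidenceGraphInclusion (J : X → Y → Prop) (P' : Set X) (L' : Set Y) :
    incidenceGraph (fun (p : P') (l : L') => J p l) ↪g incidenceGraph J where
  toFun := Sum.map Subtype.val Subtype.val
  inj' := Subtype.val_injective.sumMap Subtype.val_injective
  map_rel_iff' := by rintro (_ | _) (_ | _) <;> simp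

/- A shorter path in the ambient hexagon, together with the image of a path of length 6 in the
subhexagon, would close a cycle of length less than 12. -/
theorem IsGenPolygon.dist_inr_val_eq_six_iff {s t s' t' : ℕ} (h : IsGenPolygon J 6 s t)
    (h' : IsGenPolygon (fun (p : P') (l : L') => J p l) 6 s' t') (l₁ l₂ : L') :
    (incidenceGraph J).dist (Sum.inr l₁.1) (Sum.inr l₂.1) = 6 ↔
      (incidenceGraph (fun (p : P') (l : L') => J p l)).dist (Sum.inr l₁) (Sum.inr l₂) = 6 := by
  set f := incidenceGraphInclusion J P' L'
  have hle := (h'.connected (Sum.inr l₁) (Sum.inr l₂)).dist_map_le f.toHom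
  refine ⟨fun h6 => le_antisymm (h'.dist_le _ _) (h6.symm.trans_le hle), fun h6 => ?_⟩
  obtain ⟨g, hg, hgl⟩ := h'.connected.exists_path_of_dist (Sum.inr l₁) (Sum.inr l₂)
  by_contra hne
  have hd : (incidenceGraph J).dist (Sum.inr l₁.1) (Sum.inr l₂.1) < 6 :=
    lt_of_le_of_ne (h.dist_le _ _) hne
  have := h.connected.dist_eq_length_of_isPath (hg.map (f := f.toHom) f.injective) (by
    rw [h.egirth_eq, Walk.length_map, hgl, h6]
    exact_mod_cast (by omega :
      (incidenceGraph J).dist (Sum.inr l₁.1) (Sum.inr l₂.1) + 6 < 2 * 6))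
  rw [Walk.length_map, hgl, h6] at this
  exact hne this

namespace IsSubhexagon

variable {s t t' : ℕ}

theorem ncard_lines_through (hH : IsSubhexagon J s t' P' L') {x : X} (hx : x ∈ P') :
    {m ∈ L' | J x m}.ncard = t' + 1 := by
  rw [← hH.2.point_card ⟨x, hx⟩, ← Set.ncard_image_of_injective _ Subtype.val_injective]
  congr 1
  ext m
  simp [and_comm]

variable [Finite X] [Finite Y]

theorem ncard_lines (hH : IsSubhexagon J s t' P' L') :
    L'.ncard = (1 + t') * (1 + s * t' + s ^ 2 * t' ^ 2) := by
  rw [← Nat.card_coe_set_eq, hH.2.card_lines]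

theorem ncard_opposite_lines (h : IsGenPolygon J 6 s t) (hH : IsSubhexagon J s t' P' L')
    {l : Y} (hl : l ∈ L') :
    {m | (incidenceGraph J).dist (Sum.inr l) (Sum.inr m) = 6 ∧ m ∈ L'}.ncard =
      s ^ 2 * t' ^ 3 := by
  rw [← hH.2.ncard_opposite_lines ⟨l, hl⟩,
    ← Set.ncard_image_of_injective _ Subtype.val_injective]
  congr 1
  ext m
  constructor
  · rintro ⟨h6, hm⟩
    exact ⟨⟨m, hm⟩, (h.dist_inr_val_eq_six_iff hH.2 ⟨l, hl⟩ ⟨m, hm⟩).mp h6, rfl⟩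
  · rintro ⟨m, h6, rfl⟩
    exact ⟨(h.dist_inr_val_eq_six_iff hH.2 _ _).mpr h6, m.2⟩

theorem ncard_inter_mul_le (hH : IsSubhexagon J s t' P' L') {O : Set X}
    (hO : ∀ l : Y, ∀ x ∈ O, ∀ y ∈ O, J x l → J y l → x = y) :
    (O ∩ P').ncard * (t' + 1) ≤ L'.ncard := by
  simpa using Set.ncard_mul_le_ncard_mul J (A := O ∩ P') (B := L') (n := 1)
    (fun x hx => (hH.ncard_lines_through hx.2).ge)
    (fun m _ => (Set.ncard_le_one (Set.toFinite _)).mpr fun x hx y hy =>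
      hO m x hx.1.1 y hy.1.1 hx.2 hy.2)

end IsSubhexagon

end Subgeometry

section Subhexagons

variable {X Y : Type*} [Finite X] [Finite Y] {J : X → Y → Prop} {s t t' N : ℕ}

def subhexagons (J : X → Y → Prop) (s t' : ℕ) : Set (Set X × Set Y) :=
  {H | IsSubhexagon J s t' H.1 H.2}

theorem ncard_subhexagons_mem_line_mul (h : IsGenPolygon J 6 s t) (hs : s ≠ 0)
    (hunique : ∀ l₁ l₂ : Y, (incidenceGraph J).dist (Sum.inr l₁) (Sum.inr l₂) = 6 →
      ∃! H : Set X × Set Y, IsSubhexagon J s t' H.1 H.2 ∧ l₁ ∈ H.2 ∧ l₂ ∈ H.2)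
    (l : Y) :
    {H ∈ subhexagons J s t' | l ∈ H.2}.ncard * t' ^ 3 = t ^ 3 := by
  have key := Set.ncard_mul_eq_ncard_mul (fun m (H : Set X × Set Y) => m ∈ H.2)
    (A := {m | (incidenceGraph J).dist (Sum.inr l) (Sum.inr m) = 6})
    (B := {H ∈ subhexagons J s t' | l ∈ H.2})
    (fun m hm => by
      convert Set.ncard_eq_one_of_existsUnique (hunique l m hm) using 2
      ext H
      simp [subhexagons, and_assoc])
    (fun H hH => hH.1.ncard_opposite_lines h hH.2)
  rw [h.ncard_opposite_lines, mul_one] at key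
  exact Nat.eq_of_mul_eq_mul_left (Nat.pos_of_ne_zero (pow_ne_zero 2 hs))
    (by rw [key]; ring) |>.symm

theorem ncard_subhexagons_mem_point (hpt : ∀ p : X, {l | J p l}.ncard = t + 1)
    (hN : ∀ l : Y, {H ∈ subhexagons J s t' | l ∈ H.2}.ncard = N) (x : X) :
    (t + 1) * N = {H ∈ subhexagons J s t' | x ∈ H.1}.ncard * (t' + 1) := by
  rw [← hpt x]
  refine Set.ncard_mul_eq_ncard_mul (fun l (H : Set X × Set Y) => l ∈ H.2)
    (fun l hl => ?_) (fun H hH => ?_)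
  · rw [← hN l]
    congr 1
    ext H
    exact ⟨fun hH => ⟨hH.1.1, hH.2⟩, fun hH => ⟨⟨hH.1, hH.1.1 x l hH.2 hl⟩, hH.2⟩⟩
  · rw [← hH.1.ncard_lines_through hH.2]
    congr 1
    ext l
    exact and_comm

theorem card_lines_mul_eq (hN : ∀ l : Y, {H ∈ subhexagons J s t' | l ∈ H.2}.ncard = N) :
    Nat.card Y * N = (subhexagons J s t').ncard * ((1 + t') * (1 + s * t' + s ^ 2 * t' ^ 2)) := by
  rw [← Set.ncard_univ]
  refine Set.ncard_mul_eq_ncard_mul (fun l (H : Set X × Set Y) => l ∈ H.2)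
    (fun l _ => hN l) (fun H hH => ?_)
  rw [← IsSubhexagon.ncard_lines hH]
  congr 1
  ext l
  simp

theorem ncard_subhexagons_mul_two {q : ℕ} (h : IsGenPolygon J 6 q q)
    (hN : ∀ l : Y, {H ∈ subhexagons J q 1 | l ∈ H.2}.ncard = q ^ 3) :
    (subhexagons J q 1).ncard * 2 = (q + 1) * q ^ 3 * (q ^ 2 - q + 1) := by
  have hfactor : 1 + q * q + q ^ 2 * q ^ 2 = (1 + q + q ^ 2) * (q ^ 2 - q + 1) := by
    zify [Nat.le_self_pow two_ne_zero q]
    ring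
  have := card_lines_mul_eq hN
  rw [h.card_lines, hfactor] at this
  refine Nat.eq_of_mul_eq_mul_right (show 0 < 1 + q + q ^ 2 by positivity) ?_
  calc _ = (subhexagons J q 1).ncard * ((1 + 1) * (1 + q * 1 + q ^ 2 * 1 ^ 2)) := by ring
    _ = _ := by rw [← this]; ring

end Subhexagons

/-- Bound on partial distance-2 ovoids avoiding full intersection with subhexagons:
if no subhexagon of order `(q, 1)` contains `q² + q + 1` points of a partial distance-2
ovoid `O`, then `|O| ≤ (q² − q + 1)(q² + q)`. -/
theorem partial_ovoid_bound_of_no_full_subhexagon {P L : Type*} [Fintype P] [Fintype L]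
    {I : P → L → Prop} {q : ℕ} (hq : 2 ≤ q) (hhex : IsGenPolygon I 6 q q)
    (hunique : ∀ l₁ l₂ : L,
      (incidenceGraph I).dist (Sum.inr l₁) (Sum.inr l₂) = 6 →
      ∃! x : Set P × Set L, IsSubhexagon I q 1 x.1 x.2 ∧ l₁ ∈ x.2 ∧ l₂ ∈ x.2)
    (O : Set P)
    (hO : ∀ l : L, ∀ x ∈ O, ∀ y ∈ O, I x l → I y l → x = y)
    (hmeet : ∀ P' : Set P, ∀ L' : Set L, IsSubhexagon I q 1 P' L' →
      (O ∩ P').ncard ≠ q ^ 2 + q + 1) :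
    O.ncard ≤ (q ^ 2 - q + 1) * (q ^ 2 + q) := by
  have hline : ∀ l : L, {H ∈ subhexagons I q 1 | l ∈ H.2}.ncard = q ^ 3 := fun l => by
    simpa using ncard_subhexagons_mem_line_mul hhex (by omega) hunique l
  obtain ⟨x₀⟩ := hhex.pts_nonempty
  set c := {H ∈ subhexagons I q 1 | x₀ ∈ H.1}.ncard
  have hc : (q + 1) * q ^ 3 = c * 2 := ncard_subhexagons_mem_point hhex.point_card hline x₀
  have hpoint : ∀ x : P, {H ∈ subhexagons I q 1 | x ∈ H.1}.ncard = c := fun x =>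
    Nat.eq_of_mul_eq_mul_right two_pos
      ((ncard_subhexagons_mem_point hhex.point_card hline x).symm.trans hc)
  have hS : (subhexagons I q 1).ncard = c * (q ^ 2 - q + 1) :=
    Nat.eq_of_mul_eq_mul_right two_pos (by rw [ncard_subhexagons_mul_two hhex hline, hc]; ring)
  have hinter : ∀ H ∈ subhexagons I q 1, (O ∩ H.1).ncard ≤ q ^ 2 + q := fun H hH => by
    have := hH.ncard_inter_mul_le hO
    rw [hH.ncard_lines] at this
    have := hmeet H.1 H.2 hH
    omega
  have hcount := Set.ncard_mul_le_ncard_mul (fun x (H : Set P × Set L) => x ∈ H.1)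
    (fun x _ => (hpoint x).ge) hinter
  rw [hS, mul_assoc, mul_comm] at hcount
  have hc0 : 0 < c := by
    have : 0 < (q + 1) * q ^ 3 := by positivity
    omega
  exact Nat.le_of_mul_le_mul_left hcount hc0
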